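/- arXiv:2602.10290 — 6 statements merged into one kernel-verified Lean document; each statement's English description precedes it below -/
import Mathlib

section
/- In the BR-reduction election for a 3-CNF formula Φ with p variables and q clauses, there exists an assignment σ : Fin p → Bool whose general-election winner is x⊤ if and only if Φ is satisfiable. (Correctness of the NP-hardness reduction for the Best-Response-at-Least-U problem: the distinguished voter has a primary strategy achieving the threshold utility exactly when Φ is satisfiable.) -/
/-! Common framework: 3-CNF formulas and the BR-reduction election. -/

/-- A literal over `p` variables: a variable index together with a polarity. -/
abbrev Lit (p : ℕ) := Fin p × Bool

/-- A 3-clause: a triple of literals. -/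
abbrev Clause3 (p : ℕ) := Lit p × Lit p × Lit p

/-- A 3-CNF formula: a finite list of 3-clauses. -/
abbrev CNF3 (p : ℕ) := List (Clause3 p)

/-- A literal `(k, ε)` is true under assignment `σ` iff `σ k = ε`. -/
def litTrue {p : ℕ} (σ : Fin p → Bool) (l : Lit p) : Bool := σ l.1 == l.2

/-- An assignment satisfies a clause iff some literal of the clause is true. -/
def satClause {p : ℕ} (σ : Fin p → Bool) (c : Clause3 p) : Bool :=
  litTrue σ c.1 || litTrue σ c.2.1 || litTrue σ c.2.2

/-- An assignment satisfies a 3-CNF formula iff it satisfies every clause. -/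
def Satisfies {p : ℕ} (σ : Fin p → Bool) (Φ : CNF3 p) : Prop :=
  ∀ c ∈ Φ, satClause σ c = true

/-- Candidates of the BR-reduction election: the `2p` literals plus the
two anchor candidates `x⊤ = Sum.inr true` and `x⊥ = Sum.inr false`. -/
abbrev Cand (p : ℕ) := Lit p ⊕ Bool

/-- The anchor candidate `x⊤`. -/
def xTop (p : ℕ) : Cand p := Sum.inr true

/-- The anchor candidate `x⊥`. -/
def xBot (p : ℕ) : Cand p := Sum.inr false

instance {p : ℕ} : Nonempty (Cand p) := ⟨Sum.inr true⟩

/-- The first literal of a clause (in listed order) that is true under `σ`. -/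
def firstTrueLit {p : ℕ} (σ : Fin p → Bool) (c : Clause3 p) : Option (Lit p) :=
  if litTrue σ c.1 then some c.1
  else if litTrue σ c.2.1 then some c.2.1
  else if litTrue σ c.2.2 then some c.2.2
  else none

/-- The general-election tally of the BR-reduction election for `Φ` under the
assignment `σ`: `x⊤` gets `q + 2` votes, `x⊥` gets `q + 1` plus one vote per
falsified clause, and each satisfied clause contributes one vote to its first
true literal. -/
def tally {p : ℕ} (Φ : CNF3 p) (σ : Fin p → Bool) : Cand p → ℕ
  | Sum.inr true => Φ.length + 2
  | Sum.inr false => (Φ.length + 1) + (Φ.filter (fun c => !(satClause σ c))).length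
  | Sum.inl l => (Φ.filter (fun c => decide (firstTrueLit σ c = some l))).length

open Classical in
/-- The FPTP winner with respect to the tie-breaking linear order `r`:
the `r`-least candidate among the candidates maximizing the tally `t`. -/
noncomputable def fptpWinner {A : Type*} [Fintype A] [Nonempty A]
    (r : LinearOrder A) (t : A → ℕ) : A :=
  @Finset.min' A r (Finset.univ.filter fun a => ∀ b, t b ≤ t a) (by
    obtain ⟨a, -, ha⟩ := Finset.exists_max_image (Finset.univ : Finset A) t
      ⟨Classical.arbitrary A, Finset.mem_univ _⟩
    exact ⟨a, Finset.mem_filter.mpr ⟨Finset.mem_univ _, fun b => ha b (Finset.mem_univ _)⟩⟩)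

/-- The general-election winner of the BR-reduction election under assignment `σ`,
with tie-breaking order `r`. -/
noncomputable def geWinner {p : ℕ} (Φ : CNF3 p) (r : LinearOrder (Cand p))
    (σ : Fin p → Bool) : Cand p :=
  fptpWinner r (tally Φ σ)

/-! `x⊤` has `q + 2` votes and every literal at most `q`, while `x⊥` has `q + 1` plus the number
of falsified clauses. Since ties between the anchors go to `x⊥`, `x⊤` wins exactly when `x⊥` is
strictly behind it, i.e. when no clause is falsified. -/

section FPTP

variable {A : Type*} [Fintype A] [Nonempty A] (r : LinearOrder A) (t : A → ℕ)

open Classical in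
theorem le_tally_fptpWinner (b : A) : t b ≤ t (fptpWinner r t) := by
  have hmem : fptpWinner r t ∈ Finset.univ.filter fun a => ∀ c, t c ≤ t a :=
    @Finset.min'_mem A r _ _
  exact (Finset.mem_filter.mp hmem).2 b

theorem fptpWinner_le_of_isMax {a : A} (ha : ∀ b, t b ≤ t a) : r.le (fptpWinner r t) a := by
  classical
  exact @Finset.min'_le A r _ a (Finset.mem_filter.mpr ⟨Finset.mem_univ a, ha⟩)

theorem tally_lt_of_lt_fptpWinner {b : A} (hb : r.lt b (fptpWinner r t)) :
    t b < t (fptpWinner r t) := by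
  refine (le_tally_fptpWinner r t b).lt_of_ne fun heq => ?_
  have hmax : ∀ c, t c ≤ t b := heq ▸ le_tally_fptpWinner r t
  exact @not_le_of_gt A r.toPreorder _ _ hb (fptpWinner_le_of_isMax r t hmax)

theorem fptpWinner_eq_of_forall_lt {a : A} (ha : ∀ b, b ≠ a → t b < t a) :
    fptpWinner r t = a := by
  by_contra hne
  exact (ha _ hne).not_ge (le_tally_fptpWinner r t a)

end FPTP

section Tally

variable {p : ℕ} (Φ : CNF3 p) (σ : Fin p → Bool)

theorem tally_inl_le_length (l : Lit p) : tally Φ σ (Sum.inl l) ≤ Φ.length :=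
  List.length_filter_le _ _

theorem falsified_length_eq_zero_iff :
    (Φ.filter fun c => !(satClause σ c)).length = 0 ↔ Satisfies σ Φ := by
  simp [List.filter_eq_nil_iff, Satisfies]

theorem tally_xBot_lt_tally_xTop_iff :
    tally Φ σ (xBot p) < tally Φ σ (xTop p) ↔ Satisfies σ Φ := by
  rw [← falsified_length_eq_zero_iff]
  simp only [tally, xBot, xTop]
  omega

theorem tally_lt_tally_xTop_of_satisfies (hσ : Satisfies σ Φ) {b : Cand p} (hb : b ≠ xTop p) :
    tally Φ σ b < tally Φ σ (xTop p) := by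
  rcases b with l | _ | _
  · exact (tally_inl_le_length Φ σ l).trans_lt (by simp [tally, xTop])
  · exact (tally_xBot_lt_tally_xTop_iff Φ σ).mpr hσ
  · exact absurd rfl hb

end Tally

/-- in the BR-reduction election for `Φ`, there exists an assignment
whose general-election winner is `x⊤` iff `Φ` is satisfiable (for any tie-breaking
order in which `x⊥` precedes `x⊤`). -/
theorem stmt0 {p : ℕ} (Φ : CNF3 p) (r : LinearOrder (Cand p))
    (hr : r.lt (xBot p) (xTop p)) :
    (∃ σ : Fin p → Bool, geWinner Φ r σ = xTop p) ↔
      (∃ σ : Fin p → Bool, Satisfies σ Φ) := by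
  constructor
  · rintro ⟨σ, hσ⟩
    have hlt : tally Φ σ (xBot p) < tally Φ σ (xTop p) := by
      rw [← hσ] at hr ⊢
      exact tally_lt_of_lt_fptpWinner r _ hr
    exact ⟨σ, (tally_xBot_lt_tally_xTop_iff Φ σ).mp hlt⟩
  · rintro ⟨σ, hσ⟩
    exact ⟨σ, fptpWinner_eq_of_forall_lt r _ fun b => tally_lt_tally_xTop_of_satisfies Φ σ hσ⟩
end

section
/- In the BR-reduction election for a 3-CNF formula Φ with p variables and q clauses, for every assignment σ : Fin p → Bool the general-election winner under σ equals x⊤ if σ satisfies Φ, and equals x⊥ otherwise. -/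
/-! Every literal receives at most `q` votes, while `x⊤` receives `q + 2`. The anchor `x⊥`
receives `q + 1` plus the number of falsified clauses, so it reaches `q + 2` exactly when `σ`
falsifies some clause, and then it beats `x⊤` (by votes or by the tie-break). -/

theorem fptpWinner_eq_of_isMax {A : Type*} [Fintype A] [Nonempty A] (r : LinearOrder A)
    (t : A → ℕ) {a : A} (ha : ∀ b, t b ≤ t a) (hmin : ∀ b, (∀ c, t c ≤ t b) → r.le a b) :
    fptpWinner r t = a := by
  let _ := r
  apply le_antisymm
  · exact Finset.min'_le _ _ (Finset.mem_filter.mpr ⟨Finset.mem_univ a, ha⟩)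
  · exact Finset.le_min' _ _ _ fun b hb => hmin b (Finset.mem_filter.mp hb).2

section Tally

variable {p : ℕ} (Φ : CNF3 p) (σ : Fin p → Bool)

theorem tally_xTop : tally Φ σ (xTop p) = Φ.length + 2 := rfl

theorem tally_xBot_of_satisfies (h : Satisfies σ Φ) : tally Φ σ (xBot p) = Φ.length + 1 := by
  have : Φ.filter (fun c => !satClause σ c) = [] :=
    List.filter_eq_nil_iff.mpr fun c hc => by simp [h c hc]
  simp [xBot, tally, this]

theorem tally_xTop_le_tally_xBot_of_not_satisfies (h : ¬ Satisfies σ Φ) :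
    tally Φ σ (xTop p) ≤ tally Φ σ (xBot p) := by
  obtain ⟨c, hc, hfalse⟩ : ∃ c ∈ Φ, satClause σ c = false := by
    simpa only [Satisfies, not_forall, Bool.not_eq_true, exists_prop] using h
  have : 0 < (Φ.filter (fun c => !satClause σ c)).length :=
    List.length_pos_of_mem (List.mem_filter.mpr ⟨hc, by simp [hfalse]⟩)
  simp only [xTop, xBot, tally]
  omega

end Tally

/-- in the BR-reduction election for `Φ`, for every assignment `σ`
the general-election winner is `x⊤` if `σ` satisfies `Φ`, and `x⊥` otherwise. -/
theorem stmt1 {p : ℕ} (Φ : CNF3 p) (r : LinearOrder (Cand p))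
    (hr : r.lt (xBot p) (xTop p)) (σ : Fin p → Bool) :
    (Satisfies σ Φ → geWinner Φ r σ = xTop p) ∧
    (¬ Satisfies σ Φ → geWinner Φ r σ = xBot p) := by
  have hlit := tally_inl_le_length Φ σ
  have htop := tally_xTop Φ σ
  refine ⟨fun hsat => ?_, fun hunsat => ?_⟩
  · have hbot := tally_xBot_of_satisfies Φ σ hsat
    refine fptpWinner_eq_of_isMax r _ ?_ ?_
    · rintro (l | _ | _) <;> grind [xTop, xBot]
    · rintro (l | _ | _) hmax
      · exact absurd (hmax (xTop p)) (by grind)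
      · exact absurd (hmax (xTop p)) (by grind [xBot])
      · exact r.le_refl _
  · have hbot := tally_xTop_le_tally_xBot_of_not_satisfies Φ σ hunsat
    refine fptpWinner_eq_of_isMax r _ ?_ ?_
    · rintro (l | _ | _) <;> grind [xTop, xBot]
    · rintro (l | _ | _) hmax
      · exact absurd (hmax (xBot p)) (by grind)
      · exact r.le_refl _
      · exact @le_of_lt _ r.toPreorder _ _ hr
end

section
/- Consider the BR-reduction election for a 3-CNF formula Φ with p variables and q clauses, viewed as a one-strategic-voter game in which the voter chooses an assignment σ : Fin p → Bool and receives utility u(winner(σ)), where u : A → ℚ satisfies u(x⊤) > u(x⊥). If the all-false assignment σ₀ (σ₀ k = false for all k) falsifies at least one clause of Φ, then σ₀ is a pure Nash equilibrium — i.e., u(winner(σ₀)) ≥ u(winner(σ)) for every assignment σ — if and only if Φ is unsatisfiable. (Correctness of the coNP-hardness reduction for Nash-equilibrium verification.) -/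
/-! The winner of `t_σ` is determined by whether `σ` satisfies `Φ`: if it does, `x⊥` has `q + 1`
votes and loses to `x⊤` with `q + 2`; if not, `x⊥` has at least `q + 2` votes and wins, since it
precedes `x⊤` in the tie-breaking order and every literal has at most `q` votes. So the voter's
utility is `u x⊤` at a satisfying assignment and `u x⊥` elsewhere, and the falsifying `σ₀` is an
equilibrium exactly when no satisfying assignment exists. -/

section FPTP

variable {A : Type*} [Fintype A] [Nonempty A] (r : LinearOrder A) (t : A → ℕ)

theorem fptpWinner_eq {a : A} (hmax : ∀ b, t b ≤ t a) (htie : ∀ b, t a ≤ t b → r.le a b) :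
    fptpWinner r t = a := by
  let := r
  unfold fptpWinner
  refine le_antisymm (Finset.min'_le _ a (by simpa using hmax)) (Finset.le_min' _ _ _ ?_)
  intro b hb
  exact htie b ((Finset.mem_filter.mp hb).2 a)

theorem fptpWinner_eq_of_lt {a : A} (h : ∀ b, b ≠ a → t b < t a) : fptpWinner r t = a := by
  refine fptpWinner_eq r t (fun b => ?_) (fun b hb => ?_)
  · rcases eq_or_ne b a with rfl | hba
    · exact le_rfl
    · exact (h b hba).le
  · rcases eq_or_ne b a with rfl | hba
    · exact r.le_refl b
    · exact absurd hb (h b hba).not_ge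

end FPTP

section Tally

variable {p : ℕ} (Φ : CNF3 p) (σ : Fin p → Bool)

theorem not_satisfies_iff : ¬ Satisfies σ Φ ↔ ∃ c ∈ Φ, satClause σ c = false := by
  simp only [Satisfies, not_forall, Bool.not_eq_true, exists_prop]

theorem length_add_two_le_tally_xBot (h : ¬ Satisfies σ Φ) :
    Φ.length + 2 ≤ tally Φ σ (xBot p) := by
  obtain ⟨c, hc, hcf⟩ := (not_satisfies_iff Φ σ).mp h
  have hpos : 0 < (Φ.filter (fun c => !(satClause σ c))).length :=
    List.length_pos_of_mem (List.mem_filter.mpr ⟨hc, by simp [hcf]⟩)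
  simp only [tally, xBot]
  omega

end Tally

section Winner

variable {p : ℕ} (Φ : CNF3 p) (r : LinearOrder (Cand p)) {σ : Fin p → Bool}

theorem geWinner_eq_xTop_of_satisfies (h : Satisfies σ Φ) : geWinner Φ r σ = xTop p := by
  refine fptpWinner_eq_of_lt r _ fun b hb => ?_
  rw [tally_xTop]
  rcases b with l | _ | _
  · have := tally_inl_le_length Φ σ l
    omega
  · exact (tally_xBot_of_satisfies Φ σ h).trans_lt (by omega)
  · exact absurd rfl hb

theorem geWinner_eq_xBot_of_not_satisfies (hr : r.lt (xBot p) (xTop p))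
    (h : ¬ Satisfies σ Φ) : geWinner Φ r σ = xBot p := by
  have hbot := length_add_two_le_tally_xBot Φ σ h
  have hinl := tally_inl_le_length Φ σ
  refine fptpWinner_eq r _ (fun b => ?_) (fun b hb => ?_)
  · rcases b with l | _ | _
    · exact (hinl l).trans (by omega)
    · exact le_rfl
    · exact (tally_xTop Φ σ).trans_le hbot
  · rcases b with l | _ | _
    · exact absurd ((hinl l).trans' hb) (by omega)
    · exact r.le_refl _
    · exact ((r.lt_iff_le_not_ge _ _).mp hr).1

end Winner

theorem stmt3_general {p : ℕ} (Φ : CNF3 p) (r : LinearOrder (Cand p))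
    (hr : r.lt (xBot p) (xTop p)) (u : Cand p → ℚ)
    (hu : u (xBot p) < u (xTop p))
    (σ₀ : Fin p → Bool)
    (hfals : ∃ c ∈ Φ, satClause σ₀ c = false) :
    (∀ σ : Fin p → Bool, u (geWinner Φ r σ) ≤ u (geWinner Φ r σ₀)) ↔
      ¬ ∃ σ : Fin p → Bool, Satisfies σ Φ := by
  have hσ₀ : geWinner Φ r σ₀ = xBot p :=
    geWinner_eq_xBot_of_not_satisfies Φ r hr ((not_satisfies_iff Φ σ₀).mpr hfals)
  rw [hσ₀]
  constructor
  · rintro hne ⟨σ, hσ⟩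
    have := hne σ
    rw [geWinner_eq_xTop_of_satisfies Φ r hσ] at this
    exact this.not_gt hu
  · intro hunsat σ
    rw [geWinner_eq_xBot_of_not_satisfies Φ r hr fun hσ => hunsat ⟨σ, hσ⟩]

/-- correctness of the coNP-hardness reduction for NE verification.
View the BR-reduction election as a one-strategic-voter game in which the voter
chooses an assignment `σ` and receives utility `u (geWinner Φ r σ)`, where
`u x⊤ > u x⊥`.  If the all-false assignment `σ₀` falsifies at least one clause
of `Φ`, then `σ₀` is a pure Nash equilibrium iff `Φ` is unsatisfiable. -/
theorem stmt3 {p : ℕ} (Φ : CNF3 p) (r : LinearOrder (Cand p))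
    (hr : r.lt (xBot p) (xTop p)) (u : Cand p → ℚ)
    (hu : u (xBot p) < u (xTop p))
    (σ₀ : Fin p → Bool) (hσ₀ : σ₀ = fun _ => false)
    (hfals : ∃ c ∈ Φ, satClause σ₀ c = false) :
    (∀ σ : Fin p → Bool, u (geWinner Φ r σ) ≤ u (geWinner Φ r σ₀)) ↔
      ¬ ∃ σ : Fin p → Bool, Satisfies σ Φ :=
  stmt3_general Φ r hr u hu σ₀ hfals
end

section
/- For every nX, nY ∈ ℕ and every predicate φ : (Fin nX → Bool) → (Fin nY → Bool) → Prop, the game G_φ has a pure Nash equilibrium if and only if there exists x : Fin nX → Bool such that φ x y holds for all y : Fin nY → Bool. (Correctness of the Σ₂ᴾ-hardness reduction from 2-QBF for pure Nash equilibrium existence in primary elections.) -/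
/-! The two-player game `G_φ` of the Σ₂ᴾ-hardness reduction: player Odd chooses
`(x, b_o)`, player Even chooses `(y, b_e)`; Odd wins iff `φ x y` holds or
`b_o = b_e`; Odd's utility is 1 if Odd wins and 0 otherwise, Even's is the
complement. -/

open Classical in
/-- Odd's utility at the profile `((x, bo), (y, be))`. -/
noncomputable def uOdd {nX nY : ℕ} (φ : (Fin nX → Bool) → (Fin nY → Bool) → Prop)
    (x : Fin nX → Bool) (bo : Bool) (y : Fin nY → Bool) (be : Bool) : ℚ :=
  if φ x y ∨ bo = be then 1 else 0

/-- Even's utility: one minus Odd's. -/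
noncomputable def uEven {nX nY : ℕ} (φ : (Fin nX → Bool) → (Fin nY → Bool) → Prop)
    (x : Fin nX → Bool) (bo : Bool) (y : Fin nY → Bool) (be : Bool) : ℚ :=
  1 - uOdd φ x bo y be

/-- A pure Nash equilibrium of `G_φ`: neither player can strictly increase her
own utility by unilaterally changing her own strategy. -/
def IsPureNE {nX nY : ℕ} (φ : (Fin nX → Bool) → (Fin nY → Bool) → Prop)
    (x : Fin nX → Bool) (bo : Bool) (y : Fin nY → Bool) (be : Bool) : Prop :=
  (∀ (x' : Fin nX → Bool) (bo' : Bool), uOdd φ x' bo' y be ≤ uOdd φ x bo y be) ∧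
  (∀ (y' : Fin nY → Bool) (be' : Bool), uEven φ x bo y' be' ≤ uEven φ x bo y be)

/-! Odd can always win by matching Even's bit, so at an equilibrium Odd wins; then Even,
who could flip her bit, must be unable to falsify `φ x ·`. Conversely, once `∀ y, φ x y`,
Odd wins whatever Even does, so every profile with Odd playing `x` is an equilibrium. -/

section Game

variable {nX nY : ℕ} {φ : (Fin nX → Bool) → (Fin nY → Bool) → Prop}
  {x : Fin nX → Bool} {bo : Bool} {y : Fin nY → Bool} {be : Bool}

theorem uOdd_le_one : uOdd φ x bo y be ≤ 1 := by
  unfold uOdd; split_ifs <;> norm_num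

theorem uOdd_of_bit_eq (h : bo = be) : uOdd φ x bo y be = 1 := by
  simp [uOdd, h]

theorem uOdd_of_phi (h : φ x y) : uOdd φ x bo y be = 1 := by
  simp [uOdd, h]

theorem uOdd_of_not_phi (h : ¬φ x y) : uOdd φ x bo y (!bo) = 0 := by
  simp [uOdd, h]

theorem IsPureNE.uOdd_eq_one (h : IsPureNE φ x bo y be) : uOdd φ x bo y be = 1 :=
  le_antisymm uOdd_le_one ((uOdd_of_bit_eq rfl).symm.trans_le (h.1 x be))

theorem IsPureNE.forall_phi (h : IsPureNE φ x bo y be) (y' : Fin nY → Bool) : φ x y' := by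
  by_contra hφ
  have hdev := h.2 y' (!bo)
  simp only [uEven, h.uOdd_eq_one, uOdd_of_not_phi hφ] at hdev
  norm_num at hdev

theorem isPureNE_of_forall_phi (hx : ∀ y, φ x y) : IsPureNE φ x bo y be := by
  refine ⟨fun x' bo' => ?_, fun y' be' => ?_⟩
  · rw [uOdd_of_phi (hx y)]
    exact uOdd_le_one
  · simp only [uEven, uOdd_of_phi (hx _), le_refl]

end Game

/-- `G_φ` has a pure Nash equilibrium iff
`∃ x, ∀ y, φ x y` holds. -/
theorem stmt4 (nX nY : ℕ) (φ : (Fin nX → Bool) → (Fin nY → Bool) → Prop) :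
    (∃ (x : Fin nX → Bool) (bo : Bool) (y : Fin nY → Bool) (be : Bool),
        IsPureNE φ x bo y be) ↔
      ∃ x : Fin nX → Bool, ∀ y : Fin nY → Bool, φ x y := by
  constructor
  · rintro ⟨x, bo, y, be, h⟩
    exact ⟨x, h.forall_phi⟩
  · rintro ⟨x, hx⟩
    exact ⟨x, true, fun _ => true, true, isPureNE_of_forall_phi hx⟩
end

section
/- Fix p ∈ ℕ, a role function Q : Fin p → Bool, and a predicate φ : (Fin p → Bool) → Prop. There exists a strategy f for the existential player (a family of functions f_k : (Fin k → Bool) → Bool, one for each stage k with Q k = true) such that every assignment σ : Fin p → Bool consistent with f satisfies φ, if and only if the quantified formula T_Q(φ) is true. (Game-semantics correctness underlying the PSPACE-hardness of sequential dominant strategies.) -/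
/-- The quantified formula `T_Q(ψ)`: stage `k` contributes `∃ x_k` if
`Q k = true` and `∀ x_k` if `Q k = false`, applied in increasing order of `k`. -/
def TQ : (p : ℕ) → (Fin p → Bool) → ((Fin p → Bool) → Prop) → Prop
  | 0, _, ψ => ψ (fun k => k.elim0)
  | p + 1, Q, ψ =>
    if Q 0 then
      ∃ b : Bool, TQ p (fun k => Q k.succ) (fun σ => ψ (Fin.cons b σ))
    else
      ∀ b : Bool, TQ p (fun k => Q k.succ) (fun σ => ψ (Fin.cons b σ))

/-- An assignment `σ` is consistent with the existential player's strategy `f`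
iff at every existential stage `k` (i.e. `Q k = true`), `σ k` equals `f k`
applied to the restriction of `σ` to the indices smaller than `k`. -/
def Consistent {p : ℕ} (Q : Fin p → Bool)
    (f : ∀ k : Fin p, (Fin (k : ℕ) → Bool) → Bool) (σ : Fin p → Bool) : Prop :=
  ∀ k : Fin p, Q k = true →
    σ k = f k (fun j => σ ⟨(j : ℕ), lt_trans j.isLt k.isLt⟩)

/-!
Induction on `p`, peeling off stage `0`. After a first move `b`, a strategy `f` induces a strategy
for the remaining `p` stages (feed `b` as the first entry of every history), and it wins the
residual game `φ ∘ Fin.cons b` whenever `f` wins and `b` is a move `f` allows. Conversely, winning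
strategies `g b` for the residual games glue into one strategy for the whole game, which plays the
`∃`-witness at stage `0` and afterwards follows `g` of the move actually made.
-/

abbrev Strategy (p : ℕ) : Type := ∀ k : Fin p, (Fin (k : ℕ) → Bool) → Bool

section

variable {p : ℕ}

def Wins (Q : Fin p → Bool) (φ : (Fin p → Bool) → Prop) (f : Strategy p) : Prop :=
  ∀ σ, Consistent Q f σ → φ σ

namespace Strategy

def after (f : Strategy (p + 1)) (b : Bool) : Strategy p :=
  fun k v => f k.succ (Fin.cons b v)

def cons (b : Bool) (g : Bool → Strategy p) : Strategy (p + 1) :=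
  fun k => Fin.cases (fun _ => b) (fun k w => g (w ⟨0, k.succ_pos⟩) k fun j => w j.succ) k

end Strategy

theorem consistent_cons_iff (Q : Fin (p + 1) → Bool) (f : Strategy (p + 1)) (b : Bool)
    (τ : Fin p → Bool) :
    Consistent Q f (Fin.cons b τ) ↔
      (Q 0 = true → b = f 0 Fin.elim0) ∧ Consistent (Fin.tail Q) (f.after b) τ := by
  simp only [Consistent, Fin.forall_fin_succ, Fin.cons_zero, Fin.cons_succ, Fin.tail,
    Strategy.after]
  refine and_congr (imp_congr_right fun _ => ?_)
    (forall_congr' fun k => imp_congr_right fun _ => ?_)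
  · exact iff_of_eq (congrArg (b = f 0 ·) (funext fun j => j.elim0))
  · rw [congrArg (f k.succ) (funext fun j => ?_)]
    cases j using Fin.cases <;> rfl

theorem Wins.after {Q : Fin (p + 1) → Bool} {φ : (Fin (p + 1) → Bool) → Prop}
    {f : Strategy (p + 1)} (hf : Wins Q φ f) {b : Bool} (hb : Q 0 = true → b = f 0 Fin.elim0) :
    Wins (Fin.tail Q) (fun τ => φ (Fin.cons b τ)) (f.after b) :=
  fun τ hτ => hf _ ((consistent_cons_iff Q f b τ).2 ⟨hb, hτ⟩)

theorem wins_cons {Q : Fin (p + 1) → Bool} {φ : (Fin (p + 1) → Bool) → Prop} {b : Bool}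
    {g : Bool → Strategy p}
    (hg : ∀ c, (Q 0 = true → c = b) → Wins (Fin.tail Q) (fun τ => φ (Fin.cons c τ)) (g c)) :
    Wins Q φ (Strategy.cons b g) := by
  intro σ hσ
  rw [← Fin.cons_self_tail σ] at hσ ⊢
  obtain ⟨h0, htail⟩ := (consistent_cons_iff Q _ _ _).1 hσ
  exact hg (σ 0) h0 _ htail

end

/-- the existential player has a strategy `f` (a family of
functions `f_k : (Fin k → Bool) → Bool`, used at the stages with `Q k = true`)
such that every assignment consistent with `f` satisfies `φ`, iff the
quantified formula `T_Q(φ)` is true. -/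
theorem stmt7 (p : ℕ) (Q : Fin p → Bool) (φ : (Fin p → Bool) → Prop) :
    (∃ f : ∀ k : Fin p, (Fin (k : ℕ) → Bool) → Bool,
        ∀ σ : Fin p → Bool, Consistent Q f σ → φ σ) ↔
      TQ p Q φ := by
  change (∃ f, Wins Q φ f) ↔ TQ p Q φ
  induction p with
  | zero =>
    refine ⟨fun ⟨_, hf⟩ => hf _ fun k => k.elim0, fun h => ⟨fun k => k.elim0, fun σ _ => ?_⟩⟩
    rwa [Subsingleton.elim σ fun k => k.elim0]
  | succ p ih =>
    simp only [TQ]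
    split_ifs with hQ
    · constructor
      · rintro ⟨f, hf⟩
        exact ⟨f 0 Fin.elim0, (ih _ _).1 ⟨_, hf.after fun _ => rfl⟩⟩
      · rintro ⟨b, hb⟩
        obtain ⟨g, hg⟩ := (ih _ _).2 hb
        exact ⟨Strategy.cons b fun _ => g, wins_cons fun c hc => hc hQ ▸ hg⟩
    · constructor
      · rintro ⟨f, hf⟩ b
        exact (ih _ _).1 ⟨_, hf.after fun h => absurd h hQ⟩
      · intro h
        choose g hg using fun b => (ih _ (fun τ => φ (Fin.cons b τ))).2 (h b)
        -- stage `0` is universal, so the move `true` recorded there is never consulted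
        exact ⟨Strategy.cons true g, wins_cons fun c _ => hg c⟩
end

section
/- For every k ∈ ℕ and every predicate φ : (Fin k → Bool) → (Fin k → Bool) → Prop, the extensive-form game Γ_φ admits a pure subgame-perfect equilibrium if and only if the alternating quantified formula ∃x₁ ∀y₁ ∃x₂ ∀y₂ ⋯ ∃x_k ∀y_k, φ(x₁,…,x_k)(y₁,…,y_k) is true. (Correctness of the PSPACE-hardness reduction for pure SPNE existence in sequential primaries.) -/
/-! The extensive-form game `Γ_φ`.  At stage 0 Odd and Even simultaneously
choose `b_o, b_e ∈ Bool`; then for `i = 1, …, k` in order, Odd chooses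
`x_i ∈ Bool` and afterwards Even chooses `y_i ∈ Bool`, each observing all
previously made choices.  At the terminal history Odd wins iff `φ x y` holds
or `b_o = b_e`; Odd's payoff is 1 if she wins and 0 otherwise, Even's payoff is
the complement.

Histories after stage 0 are encoded as `(b_o, b_e, ms)`, where `ms : List Bool`
is the list of alternating moves made so far (even positions are Odd's moves
`x_i`, odd positions Even's moves `y_i`).  A move function assigns to each such
history a choice; a pure strategy of a player is her stage-0 choice together
with a move function. -/

/-- A move function: a choice at every history `(b_o, b_e, ms)`. -/
abbrev MoveFn : Type := Bool → Bool → List Bool → Bool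

/-- One step of play: if the alternating phase is not over, the player to move
(Odd at even positions, Even at odd positions) appends her chosen move. -/
def stepPlay (k : ℕ) (fO fE : MoveFn) (bo be : Bool) (ms : List Bool) : List Bool :=
  if ms.length < 2 * k then
    if ms.length % 2 = 0 then ms ++ [fO bo be ms] else ms ++ [fE bo be ms]
  else ms

/-- Iterated play with fuel. -/
def playout (k : ℕ) (fO fE : MoveFn) (bo be : Bool) : ℕ → List Bool → List Bool
  | 0, ms => ms
  | n + 1, ms => playout k fO fE bo be n (stepPlay k fO fE bo be ms)

/-- The terminal history reached from the history `(bo, be, ms)` when the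
players follow the move functions `fO` and `fE`. -/
def fullPlay (k : ℕ) (fO fE : MoveFn) (bo be : Bool) (ms : List Bool) : List Bool :=
  playout k fO fE bo be (2 * k) ms

/-- Odd's alternating moves `x` read off a terminal history. -/
def xOf (k : ℕ) (ms : List Bool) : Fin k → Bool := fun i => ms.getD (2 * (i : ℕ)) false

/-- Even's alternating moves `y` read off a terminal history. -/
def yOf (k : ℕ) (ms : List Bool) : Fin k → Bool := fun i => ms.getD (2 * (i : ℕ) + 1) false

open Classical in
/-- Odd's payoff at a terminal history: 1 if `φ x y ∨ b_o = b_e`, else 0. -/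
noncomputable def payOdd (k : ℕ) (φ : (Fin k → Bool) → (Fin k → Bool) → Prop)
    (bo be : Bool) (ms : List Bool) : ℚ :=
  if φ (xOf k ms) (yOf k ms) ∨ bo = be then 1 else 0

/-- Even's payoff: the complement of Odd's. -/
noncomputable def payEven (k : ℕ) (φ : (Fin k → Bool) → (Fin k → Bool) → Prop)
    (bo be : Bool) (ms : List Bool) : ℚ :=
  1 - payOdd k φ bo be ms

/-- A pure subgame-perfect equilibrium of `Γ_φ`: the profile
`((boS, fO), (beS, fE))` induces a Nash equilibrium in the subgame rooted at
every history — at the root (where stage-0 choices may be changed together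
with the continuation) and at every history `(bo, be, ms)` after stage 0
(where only the continuation move function may be changed). -/
structure IsSPNE (k : ℕ) (φ : (Fin k → Bool) → (Fin k → Bool) → Prop)
    (boS beS : Bool) (fO fE : MoveFn) : Prop where
  root_odd : ∀ (bo' : Bool) (fO' : MoveFn),
    payOdd k φ bo' beS (fullPlay k fO' fE bo' beS []) ≤
      payOdd k φ boS beS (fullPlay k fO fE boS beS [])
  root_even : ∀ (be' : Bool) (fE' : MoveFn),
    payEven k φ boS be' (fullPlay k fO fE' boS be' []) ≤
      payEven k φ boS beS (fullPlay k fO fE boS beS [])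
  sub_odd : ∀ (bo be : Bool) (ms : List Bool), ms.length ≤ 2 * k →
    ∀ fO' : MoveFn,
      payOdd k φ bo be (fullPlay k fO' fE bo be ms) ≤
        payOdd k φ bo be (fullPlay k fO fE bo be ms)
  sub_even : ∀ (bo be : Bool) (ms : List Bool), ms.length ≤ 2 * k →
    ∀ fE' : MoveFn,
      payEven k φ bo be (fullPlay k fO fE' bo be ms) ≤
        payEven k φ bo be (fullPlay k fO fE bo be ms)

/-- The alternating quantified formula `∃x₁ ∀y₁ ∃x₂ ∀y₂ ⋯ ∃x_k ∀y_k, φ x y`,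
quantifying the coordinates of `x` and `y` alternately in increasing order. -/
def altQ : (k : ℕ) → ((Fin k → Bool) → (Fin k → Bool) → Prop) → Prop
  | 0, φ => φ (fun i => i.elim0) (fun i => i.elim0)
  | k + 1, φ => ∃ x1 : Bool, ∀ y1 : Bool,
      altQ k (fun x y => φ (Fin.cons x1 x) (Fin.cons y1 y))

/-!
If `b_o = b_e`, Odd wins whatever is played afterwards. Hence on the path of an
equilibrium Odd must win (otherwise she deviates to `b_o := b_e`), while Even can
always deviate to `b_e := !b_o`, after which the rest of the game is the evaluation
game of `∃x₁ ∀y₁ ⋯ ∃x_k ∀y_k, φ x y`: Odd wins it against Even's backward-induction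
strategy only if the formula is true. Conversely, if the formula is true, Odd's
backward-induction strategy wins after every stage-0 choice of Even, so with
backward induction everywhere after stage 0 no player has a profitable deviation.
-/

section Play

variable {k : ℕ} {fO fE : MoveFn} {bo be : Bool} {ms : List Bool}

theorem stepPlay_of_even (h : ms.length < 2 * k) (he : ms.length % 2 = 0) :
    stepPlay k fO fE bo be ms = ms ++ [fO bo be ms] := by
  rw [stepPlay, if_pos h, if_pos he]

theorem stepPlay_of_odd (h : ms.length < 2 * k) (he : ¬ms.length % 2 = 0) :
    stepPlay k fO fE bo be ms = ms ++ [fE bo be ms] := by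
  rw [stepPlay, if_pos h, if_neg he]

theorem stepPlay_of_not_lt (h : ¬ms.length < 2 * k) : stepPlay k fO fE bo be ms = ms := by
  rw [stepPlay, if_neg h]

theorem length_stepPlay (h : ms.length < 2 * k) :
    (stepPlay k fO fE bo be ms).length = ms.length + 1 := by
  by_cases he : ms.length % 2 = 0
  · simp [stepPlay_of_even h he]
  · simp [stepPlay_of_odd h he]

theorem playout_of_not_lt (h : ¬ms.length < 2 * k) (n : ℕ) :
    playout k fO fE bo be n ms = ms := by
  induction n with
  | zero => rfl
  | succ n ih => rw [playout, stepPlay_of_not_lt h, ih]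

theorem playout_succ_of_le (n : ℕ) (ms : List Bool) (hn : 2 * k ≤ ms.length + n) :
    playout k fO fE bo be (n + 1) ms = playout k fO fE bo be n ms := by
  induction n generalizing ms with
  | zero => exact stepPlay_of_not_lt (by omega)
  | succ n ih =>
    by_cases h : ms.length < 2 * k
    · exact ih _ (by rw [length_stepPlay h]; omega)
    · rw [playout_of_not_lt h, playout_of_not_lt h]

theorem fullPlay_of_not_lt (h : ¬ms.length < 2 * k) : fullPlay k fO fE bo be ms = ms :=
  playout_of_not_lt h _

theorem fullPlay_stepPlay (h : ms.length < 2 * k) :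
    fullPlay k fO fE bo be ms = fullPlay k fO fE bo be (stepPlay k fO fE bo be ms) := by
  obtain ⟨n, hn⟩ : ∃ n, 2 * k = n + 1 := ⟨2 * k - 1, by omega⟩
  rw [fullPlay, fullPlay, hn, playout, playout_succ_of_le _ _ (by rw [length_stepPlay h]; omega)]

theorem fullPlay_of_even (h : ms.length < 2 * k) (he : ms.length % 2 = 0) :
    fullPlay k fO fE bo be ms = fullPlay k fO fE bo be (ms ++ [fO bo be ms]) := by
  rw [fullPlay_stepPlay h, stepPlay_of_even h he]

theorem fullPlay_of_odd (h : ms.length < 2 * k) (he : ¬ms.length % 2 = 0) :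
    fullPlay k fO fE bo be ms = fullPlay k fO fE bo be (ms ++ [fE bo be ms]) := by
  rw [fullPlay_stepPlay h, stepPlay_of_odd h he]

end Play

def OddCanWin (k : ℕ) (w : List Bool → Prop) (ms : List Bool) : Prop :=
  if ms.length < 2 * k then
    if ms.length % 2 = 0 then ∃ b, OddCanWin k w (ms ++ [b])
    else ∀ b, OddCanWin k w (ms ++ [b])
  else w ms
termination_by 2 * k - ms.length
decreasing_by all_goals simp only [List.length_append, List.length_singleton]; omega

open Classical in
noncomputable def oddOptimal (k : ℕ) (W : Bool → Bool → List Bool → Prop) : MoveFn :=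
  fun bo be ms => decide (OddCanWin k (W bo be) (ms ++ [true]))

open Classical in
noncomputable def evenOptimal (k : ℕ) (W : Bool → Bool → List Bool → Prop) : MoveFn :=
  fun bo be ms => decide (OddCanWin k (W bo be) (ms ++ [false]))

section OddCanWin

variable {k : ℕ} {w : List Bool → Prop} {ms : List Bool}

theorem oddCanWin_of_not_lt (h : ¬ms.length < 2 * k) : OddCanWin k w ms ↔ w ms := by
  rw [OddCanWin, if_neg h]

theorem oddCanWin_of_even (h : ms.length < 2 * k) (he : ms.length % 2 = 0) :
    OddCanWin k w ms ↔ ∃ b, OddCanWin k w (ms ++ [b]) := by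
  rw [OddCanWin, if_pos h, if_pos he]

theorem oddCanWin_of_odd (h : ms.length < 2 * k) (he : ¬ms.length % 2 = 0) :
    OddCanWin k w ms ↔ ∀ b, OddCanWin k w (ms ++ [b]) := by
  rw [OddCanWin, if_pos h, if_neg he]

theorem oddCanWin_of_forall (hw : ∀ ms, w ms) (ms : List Bool) : OddCanWin k w ms := by
  by_cases h : ms.length < 2 * k
  · by_cases he : ms.length % 2 = 0
    · exact (oddCanWin_of_even h he).2 ⟨true, oddCanWin_of_forall hw _⟩
    · exact (oddCanWin_of_odd h he).2 fun b => oddCanWin_of_forall hw _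
  · exact (oddCanWin_of_not_lt h).2 (hw ms)
termination_by 2 * k - ms.length
decreasing_by all_goals simp only [List.length_append, List.length_singleton]; omega

theorem oddCanWin_cons_cons (x y : Bool) (ms : List Bool) :
    OddCanWin (k + 1) w (x :: y :: ms) ↔ OddCanWin k (fun ms => w (x :: y :: ms)) ms := by
  have hlen : (x :: y :: ms).length < 2 * (k + 1) ↔ ms.length < 2 * k := by simp; omega
  have hpar : (x :: y :: ms).length % 2 = 0 ↔ ms.length % 2 = 0 := by simp; omega
  by_cases h : ms.length < 2 * k
  · have ih b := oddCanWin_cons_cons x y (ms ++ [b])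
    by_cases he : ms.length % 2 = 0
    · rw [oddCanWin_of_even (hlen.2 h) (hpar.2 he), oddCanWin_of_even h he]
      simpa only [List.cons_append] using exists_congr ih
    · rw [oddCanWin_of_odd (hlen.2 h) (mt hpar.1 he), oddCanWin_of_odd h he]
      simpa only [List.cons_append] using forall_congr' ih
  · rw [oddCanWin_of_not_lt (mt hlen.1 h), oddCanWin_of_not_lt h]
termination_by 2 * k - ms.length
decreasing_by all_goals simp only [List.length_append, List.length_singleton]; omega

end OddCanWin

section Optimal

variable {k : ℕ} {W : Bool → Bool → List Bool → Prop} {bo be : Bool} {ms : List Bool}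

theorem oddCanWin_iff_oddOptimal (h : ms.length < 2 * k) (he : ms.length % 2 = 0) :
    OddCanWin k (W bo be) ms ↔ OddCanWin k (W bo be) (ms ++ [oddOptimal k W bo be ms]) := by
  rw [oddCanWin_of_even h he, oddOptimal]
  by_cases ht : OddCanWin k (W bo be) (ms ++ [true])
  · simp [ht]
  · simp [ht, Bool.exists_bool]

theorem oddCanWin_iff_evenOptimal (h : ms.length < 2 * k) (he : ¬ms.length % 2 = 0) :
    OddCanWin k (W bo be) ms ↔ OddCanWin k (W bo be) (ms ++ [evenOptimal k W bo be ms]) := by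
  rw [oddCanWin_of_odd h he, evenOptimal]
  by_cases hf : OddCanWin k (W bo be) (ms ++ [false])
  · simp [hf, Bool.forall_bool]
  · simp [hf, Bool.forall_bool]

theorem oddCanWin_of_play_evenOptimal (fO : MoveFn) (ms : List Bool)
    (hw : W bo be (fullPlay k fO (evenOptimal k W) bo be ms)) : OddCanWin k (W bo be) ms := by
  by_cases h : ms.length < 2 * k
  · by_cases he : ms.length % 2 = 0
    · rw [fullPlay_of_even h he] at hw
      exact (oddCanWin_of_even h he).2 ⟨_, oddCanWin_of_play_evenOptimal fO _ hw⟩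
    · rw [fullPlay_of_odd h he] at hw
      exact (oddCanWin_iff_evenOptimal h he).2 (oddCanWin_of_play_evenOptimal fO _ hw)
  · rw [fullPlay_of_not_lt h] at hw
    exact (oddCanWin_of_not_lt h).2 hw
termination_by 2 * k - ms.length
decreasing_by all_goals simp only [List.length_append, List.length_singleton]; omega

theorem play_oddOptimal_of_oddCanWin (fE : MoveFn) (ms : List Bool)
    (hw : OddCanWin k (W bo be) ms) : W bo be (fullPlay k (oddOptimal k W) fE bo be ms) := by
  by_cases h : ms.length < 2 * k
  · by_cases he : ms.length % 2 = 0
    · rw [fullPlay_of_even h he]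
      exact play_oddOptimal_of_oddCanWin fE _ ((oddCanWin_iff_oddOptimal h he).1 hw)
    · rw [fullPlay_of_odd h he]
      exact play_oddOptimal_of_oddCanWin fE _ ((oddCanWin_of_odd h he).1 hw _)
  · rw [fullPlay_of_not_lt h]
    exact (oddCanWin_of_not_lt h).1 hw
termination_by 2 * k - ms.length
decreasing_by all_goals simp only [List.length_append, List.length_singleton]; omega

end Optimal

theorem xOf_cons_cons (k : ℕ) (x y : Bool) (ms : List Bool) :
    xOf (k + 1) (x :: y :: ms) = Fin.cons x (xOf k ms) := by
  funext i
  cases i using Fin.cases with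
  | zero => rfl
  | succ j => simp [xOf, Nat.mul_succ]

theorem yOf_cons_cons (k : ℕ) (x y : Bool) (ms : List Bool) :
    yOf (k + 1) (x :: y :: ms) = Fin.cons y (yOf k ms) := by
  funext i
  cases i using Fin.cases with
  | zero => rfl
  | succ j => simp [yOf, Nat.mul_succ]

theorem altQ_iff_oddCanWin (k : ℕ) (φ : (Fin k → Bool) → (Fin k → Bool) → Prop) :
    altQ k φ ↔ OddCanWin k (fun ms => φ (xOf k ms) (yOf k ms)) [] := by
  induction k with
  | zero =>
    rw [altQ, oddCanWin_of_not_lt (by simp)]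
    exact iff_of_eq (congrArg₂ φ (Subsingleton.elim _ _) (Subsingleton.elim _ _))
  | succ k ih =>
    rw [altQ, oddCanWin_of_even (by simp) (by simp)]
    refine exists_congr fun x => ?_
    rw [oddCanWin_of_odd (by simp; omega) (by simp)]
    refine forall_congr' fun y => ?_
    rw [ih, List.nil_append, List.singleton_append, oddCanWin_cons_cons]
    simp only [xOf_cons_cons, yOf_cons_cons]

def OddWinsAt (k : ℕ) (φ : (Fin k → Bool) → (Fin k → Bool) → Prop) (bo be : Bool)
    (ms : List Bool) : Prop :=
  φ (xOf k ms) (yOf k ms) ∨ bo = be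

section Equilibrium

variable {k : ℕ} {φ : (Fin k → Bool) → (Fin k → Bool) → Prop}

theorem oddWinsAt_of_ne {bo be : Bool} (h : bo ≠ be) :
    OddWinsAt k φ bo be = fun ms => φ (xOf k ms) (yOf k ms) := by
  funext ms
  simp [OddWinsAt, h]

theorem payOdd_le_payOdd_iff {bo be bo' be' : Bool} {ms ms' : List Bool} :
    payOdd k φ bo be ms ≤ payOdd k φ bo' be' ms' ↔
      (OddWinsAt k φ bo be ms → OddWinsAt k φ bo' be' ms') := by
  unfold payOdd OddWinsAt
  split_ifs <;> simp_all

theorem payEven_le_payEven_iff {bo be bo' be' : Bool} {ms ms' : List Bool} :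
    payEven k φ bo be ms ≤ payEven k φ bo' be' ms' ↔
      (OddWinsAt k φ bo' be' ms' → OddWinsAt k φ bo be ms) := by
  rw [payEven, payEven, sub_le_sub_iff_left, payOdd_le_payOdd_iff]

theorem altQ_of_isSPNE {boS beS : Bool} {fO fE : MoveFn} (h : IsSPNE k φ boS beS fO fE) :
    altQ k φ := by
  have hpath : OddWinsAt k φ boS beS (fullPlay k fO fE boS beS []) :=
    payOdd_le_payOdd_iff.1 (h.root_odd beS fO) (Or.inr rfl)
  have hdev := payEven_le_payEven_iff.1 (h.root_even (!boS) (evenOptimal k (OddWinsAt k φ))) hpath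
  have hne : boS ≠ !boS := by cases boS <;> decide
  rw [altQ_iff_oddCanWin, ← oddWinsAt_of_ne hne]
  exact oddCanWin_of_play_evenOptimal fO [] hdev

theorem isSPNE_optimal_of_altQ (hQ : altQ k φ) :
    IsSPNE k φ true true (oddOptimal k (OddWinsAt k φ)) (evenOptimal k (OddWinsAt k φ)) := by
  have hroot bo be : OddCanWin k (OddWinsAt k φ bo be) [] := by
    by_cases h : bo = be
    · exact oddCanWin_of_forall (fun _ => Or.inr h) _
    · rw [oddWinsAt_of_ne h, ← altQ_iff_oddCanWin]
      exact hQ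
  refine ⟨fun _ _ => ?_, fun be' fE' => ?_, fun _ _ ms _ fO' => ?_, fun _ _ ms _ fE' => ?_⟩
  · exact payOdd_le_payOdd_iff.2 fun _ => Or.inr rfl
  · exact payEven_le_payEven_iff.2 fun _ => play_oddOptimal_of_oddCanWin fE' [] (hroot true be')
  · exact payOdd_le_payOdd_iff.2 fun hw =>
      play_oddOptimal_of_oddCanWin _ ms (oddCanWin_of_play_evenOptimal fO' ms hw)
  · exact payEven_le_payEven_iff.2 fun hw =>
      play_oddOptimal_of_oddCanWin fE' ms (oddCanWin_of_play_evenOptimal _ ms hw)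

end Equilibrium

/-- the extensive-form game `Γ_φ` admits a pure subgame-perfect
equilibrium iff the alternating quantified formula
`∃x₁ ∀y₁ ⋯ ∃x_k ∀y_k, φ x y` is true. -/
theorem stmt9 (k : ℕ) (φ : (Fin k → Bool) → (Fin k → Bool) → Prop) :
    (∃ (boS beS : Bool) (fO fE : MoveFn), IsSPNE k φ boS beS fO fE) ↔ altQ k φ :=
  ⟨fun ⟨_, _, _, _, h⟩ => altQ_of_isSPNE h, fun hQ => ⟨_, _, _, _, isSPNE_optimal_of_altQ hQ⟩⟩
end
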